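/- arXiv:2106.06088 — 5 statements merged into one kernel-verified Lean document; each statement's English description precedes it below -/
import Mathlib

section
/- Let V be a set, E ⊆ V × V a relation, and let Ē be the equivalence relation generated by E, constructed as ⋃ᵢ Eᵢ with E₀ = E ∪ E⁻¹ ∪ Δ and Eᵢ = Eᵢ₋₁ ∘ Eᵢ₋₁. Suppose there is a natural number d ≥ 2 such that for every v ∈ V the fiber π₁⁻¹(v) = {(v,w) ∈ Ē} has cardinality at most d. Then Ē = E_{d-2}. -/
/-!
With `S = E ∪ E⁻¹ ∪ Δ`, one has `Eᵢ = S^(2^i)` and `Ē = ⋃ₙ Sⁿ`. The balls `{w | Sⁿ a w}` increase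
with `n`, and once two consecutive balls agree they never grow again. Since the ball of radius `0`
is `{a}` and all balls lie in the class of `a`, which has at most `d` elements, they stabilise by
radius `d - 1 ≤ 2^(d-2)`.
-/

/-- The inductive sequence of relations: `relSeq E 0 = E ∪ E⁻¹ ∪ Δ` and
`relSeq E (i+1) = relSeq E i ∘ relSeq E i` (composition of relations). -/
def relSeq {V : Type*} (E : V → V → Prop) : ℕ → V → V → Prop
  | 0 => fun a b => E a b ∨ E b a ∨ a = b
  | (n + 1) => fun a b => ∃ w, relSeq E n a w ∧ relSeq E n w b

def iterRel {V : Type*} (R : V → V → Prop) : ℕ → V → V → Prop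
  | 0 => Eq
  | n + 1 => fun a b => ∃ w, iterRel R n a w ∧ R w b

section IterRel

variable {V : Type*} {R : V → V → Prop}

lemma iterRel_add (m n : ℕ) (a b : V) :
    iterRel R (m + n) a b ↔ ∃ w, iterRel R m a w ∧ iterRel R n w b := by
  induction n generalizing b with
  | zero => simp [iterRel]
  | succ n ih =>
    change (∃ w, iterRel R (m + n) a w ∧ R w b) ↔ _
    simp only [iterRel, ih]
    constructor
    · rintro ⟨w, ⟨u, hau, huw⟩, hwb⟩
      exact ⟨u, hau, w, huw, hwb⟩
    · rintro ⟨u, hau, w, huw, hwb⟩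
      exact ⟨w, ⟨u, hau, huw⟩, hwb⟩

lemma iterRel_mono [Std.Refl R] : Monotone (iterRel R) :=
  monotone_nat_of_le_succ fun _ _ b h => ⟨b, h, Std.Refl.refl b⟩

lemma iterRel_of_iterRel_succ_subset [Std.Refl R] {a : V} {s : ℕ}
    (hstab : {w | iterRel R (s + 1) a w} ⊆ {w | iterRel R s a w}) :
    ∀ n b, iterRel R n a b → iterRel R s a b
  | 0, _, rfl => iterRel_mono (Nat.zero_le s) a a rfl
  | n + 1, _, ⟨w, haw, hwb⟩ => hstab ⟨w, iterRel_of_iterRel_succ_subset hstab n w haw, hwb⟩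

lemma succ_le_ncard_iterRel [Std.Refl R] {a : V} {r : ℕ}
    (hfin : {w | iterRel R r a w}.Finite)
    (hgrow : ∀ s < r, ¬{w | iterRel R (s + 1) a w} ⊆ {w | iterRel R s a w}) :
    r + 1 ≤ {w | iterRel R r a w}.ncard := by
  induction r with
  | zero => simp [iterRel]
  | succ r ih =>
    have hsub : {w | iterRel R r a w} ⊆ {w | iterRel R (r + 1) a w} :=
      fun w => iterRel_mono r.le_succ a w
    have hlt := Set.ncard_lt_ncard (hsub.ssubset_of_not_subset (hgrow r r.lt_succ_self)) hfin
    have := ih (hfin.subset hsub) fun s hs => hgrow s (hs.trans r.lt_succ_self)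
    omega

lemma iterRel_pred_of_ncard_le [Std.Refl R] {a b : V} {d n : ℕ}
    (hfin : {w | ∃ n, iterRel R n a w}.Finite) (hcard : {w | ∃ n, iterRel R n a w}.ncard ≤ d)
    (hab : iterRel R n a b) : iterRel R (d - 1) a b := by
  have hball : ∀ r, {w | iterRel R r a w} ⊆ {w | ∃ n, iterRel R n a w} := fun r w h => ⟨r, h⟩
  obtain ⟨s, hsd, hstab⟩ :
      ∃ s < d, {w | iterRel R (s + 1) a w} ⊆ {w | iterRel R s a w} := by
    by_contra! hgrow
    have := succ_le_ncard_iterRel (hfin.subset (hball d)) hgrow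
    have := Set.ncard_le_ncard (hball d) hfin
    omega
  exact iterRel_mono (by omega) a b (iterRel_of_iterRel_succ_subset hstab n b hab)

end IterRel

section RelSeq

variable {V : Type*} (E : V → V → Prop)

instance : Std.Refl (relSeq E 0) :=
  ⟨fun _ => Or.inr (Or.inr rfl)⟩

lemma relSeq_eq_iterRel (n : ℕ) : relSeq E n = iterRel (relSeq E 0) (2 ^ n) := by
  induction n with
  | zero => funext a b; simp [iterRel]
  | succ n ih =>
    funext a b
    simp only [relSeq, ih, pow_succ, mul_two, iterRel_add]

lemma exists_relSeq_iff (a b : V) :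
    (∃ i, relSeq E i a b) ↔ ∃ n, iterRel (relSeq E 0) n a b := by
  refine ⟨fun ⟨i, h⟩ => ⟨2 ^ i, relSeq_eq_iterRel E i ▸ h⟩, fun ⟨n, h⟩ => ⟨n, ?_⟩⟩
  rw [relSeq_eq_iterRel E n]
  exact iterRel_mono n.lt_two_pow_self.le a b h

end RelSeq

theorem stmt1_general {V : Type*} (E : V → V → Prop) (d : ℕ)
    (hfin : ∀ v : V, {w | ∃ i, relSeq E i v w}.Finite)
    (hcard : ∀ v : V, {w | ∃ i, relSeq E i v w}.ncard ≤ d) :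
    (fun a b => ∃ i, relSeq E i a b) = relSeq E (d - 2) := by
  simp only [exists_relSeq_iff] at hfin hcard
  funext a b
  apply propext
  rw [exists_relSeq_iff, relSeq_eq_iterRel E (d - 2)]
  refine ⟨fun ⟨n, h⟩ => ?_, fun h => ⟨_, h⟩⟩
  have hd : d - 1 ≤ 2 ^ (d - 2) := by
    have := (d - 2).lt_two_pow_self
    omega
  exact iterRel_mono hd a b (iterRel_pred_of_ncard_le (hfin a) (hcard a) h)

/-- If every fiber of the first projection of the generated equivalence relation
`Ē = ⋃ᵢ Eᵢ` has at most `d` elements (for some `d ≥ 2`), then `Ē = E_{d-2}`. -/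
theorem stmt1 {V : Type*} (E : V → V → Prop) (d : ℕ) (hd : 2 ≤ d)
    (hfin : ∀ v : V, {w | ∃ i, relSeq E i v w}.Finite)
    (hcard : ∀ v : V, {w | ∃ i, relSeq E i v w}.ncard ≤ d) :
    (fun a b => ∃ i, relSeq E i a b) = relSeq E (d - 2) :=
  stmt1_general E d hfin hcard
end

section
/- Let R ⊆ S be an extension of commutative rings and let J be an ideal of S contained in R (a common ideal). Then the natural map of unit groups R* → S* ×_{(S/J)*} (R/J)* is an isomorphism of groups. That is, an element r ∈ R is a unit in R if and only if its image in S is a unit and its class in R/J is a unit, and every compatible pair of units (s, [r]) ∈ S* ×_{(S/J)*} (R/J)* arises from a unique unit of R. -/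
/-- **Units in a Milnor square.** If `R ⊆ S` is an extension of commutative rings and
`J` is an ideal of `S` contained in `R`, then `R* ≅ S* ×_{(S/J)*} (R/J)*`: an element
`r ∈ R` is a unit iff its image in `S` and its class in `R/J` are units, and every
compatible pair of units `(s, [r])` comes from a unique unit of `R`. -/
theorem stmt3 {S : Type*} [CommRing S] (R : Subring S) (J : Ideal S)
    (hJR : (J : Set S) ⊆ (R : Set S)) :
    (∀ r : R, IsUnit r ↔
      IsUnit (r : S) ∧ IsUnit (Ideal.Quotient.mk (J.comap R.subtype) r)) ∧
    (∀ (s : Sˣ) (u : (R ⧸ J.comap R.subtype)ˣ),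
      Ideal.Quotient.mk J (s : S) =
        Ideal.Quotient.lift (J.comap R.subtype)
          ((Ideal.Quotient.mk J).comp R.subtype)
          (fun a ha => Ideal.Quotient.eq_zero_iff_mem.mpr ha)
          (u : R ⧸ J.comap R.subtype) →
      ∃! r : Rˣ, (((r : Rˣ) : R) : S) = ((s : Sˣ) : S) ∧
        Ideal.Quotient.mk (J.comap R.subtype) ((r : Rˣ) : R) =
          ((u : (R ⧸ J.comap R.subtype)ˣ) : R ⧸ J.comap R.subtype)) := by
  set J' := J.comap R.subtype with hJ'def
  have key : ∀ r : R, IsUnit (r : S) → IsUnit (Ideal.Quotient.mk J' r) → IsUnit r := by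
    intro r h1 h2
    obtain ⟨v, hv⟩ := h1
    obtain ⟨t, ht⟩ := Ideal.Quotient.mk_surjective ((h2.unit⁻¹ : (R ⧸ J')ˣ) : R ⧸ J')
    have hrt : (r * t - 1 : R) ∈ J' := by
      have h0 : Ideal.Quotient.mk J' (r * t - 1) = 0 := by
        rw [RingHom.map_sub, RingHom.map_mul, RingHom.map_one, ht,
          h2.mul_val_inv, sub_self]
      exact Ideal.Quotient.eq_zero_iff_mem.mp h0
    have hrt' : (r : S) * (t : S) - 1 ∈ J := by
      have := hrt
      rw [hJ'def, Ideal.mem_comap] at this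
      simpa using this
    have hvr : ((v⁻¹ : Sˣ) : S) * (r : S) = 1 := by rw [← hv]; exact v.inv_mul
    have heq : ((v⁻¹ : Sˣ) : S) = (t : S) - ((v⁻¹ : Sˣ) : S) * ((r : S) * (t : S) - 1) := by
      rw [mul_sub, mul_one, ← mul_assoc, hvr, one_mul]; ring
    have hs : ((v⁻¹ : Sˣ) : S) ∈ R := by
      rw [heq]; exact R.sub_mem t.2 (hJR (J.mul_mem_left _ hrt'))
    refine isUnit_iff_exists_inv.mpr ⟨⟨_, hs⟩, ?_⟩
    ext
    push_cast
    rw [← hv]; exact v.mul_inv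
  refine ⟨fun r => ⟨fun hr => ⟨hr.map R.subtype, hr.map _⟩, fun h => key r h.1 h.2⟩, ?_⟩
  intro s u hsu
  obtain ⟨a, ha⟩ := Ideal.Quotient.mk_surjective (u : R ⧸ J')
  have hmk : Ideal.Quotient.mk J (s : S) = Ideal.Quotient.mk J (a : S) := by
    rw [hsu, ← ha, Ideal.Quotient.lift_mk, RingHom.comp_apply]; rfl
  have hdiff : (s : S) - (a : S) ∈ J := by
    have h0 : Ideal.Quotient.mk J ((s : S) - (a : S)) = 0 := by
      rw [RingHom.map_sub, hmk, sub_self]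
    exact Ideal.Quotient.eq_zero_iff_mem.mp h0
  have sR : (s : S) ∈ R := by
    have := R.add_mem (hJR hdiff) a.2
    simpa using this
  set r0 : R := ⟨(s : S), sR⟩ with hr0
  have hmk2 : Ideal.Quotient.mk J' r0 = (u : R ⧸ J') := by
    rw [← ha]
    rw [Ideal.Quotient.eq]
    rw [hJ'def, Ideal.mem_comap]
    simpa using hdiff
  have hunit : IsUnit r0 := by
    refine key r0 ?_ ?_
    · exact ⟨s, rfl⟩
    · rw [hmk2]; exact u.isUnit
  refine ⟨hunit.unit, ⟨?_, ?_⟩, ?_⟩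
  · rw [hunit.unit_spec]
  · rw [hunit.unit_spec, hmk2]
  · intro r' ⟨h1, h2⟩
    have : ((r' : Rˣ) : R) = r0 := Subtype.ext h1
    exact Units.ext (by rw [this, hunit.unit_spec])
end

section
/- Let f : A → B, g : B → D, h : A → C, i : C → D be a commutative square of groupoids (with a specified natural isomorphism g∘f ≅ i∘h). The square is a 2-pullback (i.e. the induced functor A → C ×_D B to the pseudo-pullback groupoid is an equivalence) if and only if for every object b of B, the induced functor on homotopy fibers hofib_b(f) → hofib_{g(b)}(i) is an equivalence of groupoids. -/
/-!
An object `(c, φ : i c ⟶ g b)` of the homotopy fiber of `i` over `g b` is the same as an object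
`(c, b, φ)` of the pseudo-pullback lying over `b`, so faithfulness, fullness and essential
surjectivity transfer one at a time between the comparison functor and the functors `fiberMap b`.
A morphism `a ⟶ a'` of `A` is tested in the fiber over `f a'`, between objects `(a, φ)` and
`(a', 𝟙)`. Conversely, since `B` is a groupoid, a morphism `x ⟶ y` of homotopy fibers becomes a
morphism of the pseudo-pullback with `B`-component `x.hom ≫ y.hom⁻¹`.
-/

open CategoryTheory

section

variable {A B C D : Type*} [Groupoid A] [Groupoid B] [Groupoid C] [Groupoid D]

/-- The comparison functor from `A` to the pseudo-pullback groupoid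
`C ×_D B` (realized as the comma category `Comma i g`, whose objects are triples
`(c, b, φ : i(c) ⟶ g(b))`), induced by a commutative square `g ∘ f ≅ i ∘ h`. -/
def toPseudoPullback (f : A ⥤ B) (g : B ⥤ D) (h : A ⥤ C) (i : C ⥤ D)
    (α : f ⋙ g ≅ h ⋙ i) : A ⥤ Comma i g where
  obj a := ⟨h.obj a, f.obj a, α.inv.app a⟩
  map {a a'} ψ := ⟨h.map ψ, f.map ψ, (α.inv.naturality ψ)⟩

/-- The induced functor on homotopy fibers `hofib_b(f) → hofib_{g(b)}(i)`, where the
homotopy fiber of `f` at `b` is realized as the comma category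
`Comma f (Functor.fromPUnit b)` (objects: pairs `(a, φ : f(a) ⟶ b)`). -/
def fiberMap (f : A ⥤ B) (g : B ⥤ D) (h : A ⥤ C) (i : C ⥤ D)
    (α : f ⋙ g ≅ h ⋙ i) (b : B) :
    Comma f (Functor.fromPUnit b) ⥤ Comma i (Functor.fromPUnit (g.obj b)) where
  obj x := ⟨h.obj x.left, x.right, α.inv.app x.left ≫ g.map x.hom⟩
  map {x y} ψ :=
    ⟨h.map ψ.left, ψ.right, by
      have hn : i.map (h.map ψ.left) ≫ α.inv.app y.left =
          α.inv.app x.left ≫ g.map (f.map ψ.left) := α.inv.naturality ψ.left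
      have hw : f.map ψ.left ≫ y.hom = x.hom := by
        simpa [Functor.fromPUnit] using ψ.w
      rw [← Category.assoc, hn, Category.assoc, ← g.map_comp, hw]
      simp [Functor.fromPUnit]⟩

namespace Comma

variable {𝒜 ℬ : Type*} [Category 𝒜] [Category ℬ] {S : 𝒜 ⥤ ℬ} {b : ℬ}
  {x y : Comma S (Functor.fromPUnit b)}

theorem fromPUnit_w (ψ : x ⟶ y) : S.map ψ.left ≫ y.hom = x.hom := by
  simp

theorem fromPUnit_hom_ext {ψ ψ' : x ⟶ y} (hψ : ψ.left = ψ'.left) : ψ = ψ' :=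
  Comma.hom_ext _ _ hψ (Subsingleton.elim _ _)

def fromPUnitHomMk (ψ : x.left ⟶ y.left) (w : S.map ψ ≫ y.hom = x.hom) : x ⟶ y :=
  ⟨ψ, eqToHom (Subsingleton.elim _ _), by simpa using w⟩

def fromPUnitIsoMk (e : x.left ≅ y.left) (w : S.map e.hom ≫ y.hom = x.hom) : x ≅ y :=
  Comma.isoMk e (eqToIso (Subsingleton.elim _ _)) (by simpa using w)

end Comma

section

variable (f : A ⥤ B) (g : B ⥤ D) (h : A ⥤ C) (i : C ⥤ D) (α : f ⋙ g ≅ h ⋙ i)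

theorem fiberMap_faithful [(toPseudoPullback f g h i α).Faithful] (b : B) :
    (fiberMap f g h i α b).Faithful where
  map_injective {x y} ψ ψ' hψ := by
    have hh : h.map ψ.left = h.map ψ'.left := congrArg CommaMorphism.left hψ
    have hf : f.map ψ.left = f.map ψ'.left := by
      rw [← cancel_mono y.hom, Comma.fromPUnit_w, Comma.fromPUnit_w]
    exact Comma.fromPUnit_hom_ext <|
      (toPseudoPullback f g h i α).map_injective (Comma.hom_ext _ _ hh hf)

theorem fiberMap_full [(toPseudoPullback f g h i α).Full] (b : B) :
    (fiberMap f g h i α b).Full where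
  map_surjective {x y} m := by
    let c : h.obj x.left ⟶ h.obj y.left := m.left
    have hm : i.map c ≫ α.inv.app y.left ≫ g.map y.hom = α.inv.app x.left ≫ g.map x.hom :=
      Comma.fromPUnit_w m
    have hw : i.map c ≫ α.inv.app y.left =
        α.inv.app x.left ≫ g.map (x.hom ≫ Groupoid.inv y.hom) := by
      refine (cancel_mono (g.map y.hom)).1 ?_
      rw [Category.assoc, hm, Category.assoc, ← g.map_comp, Category.assoc, Groupoid.inv_comp,
        Category.comp_id]
    let m' : (toPseudoPullback f g h i α).obj x.left ⟶ (toPseudoPullback f g h i α).obj y.left :=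
      ⟨c, x.hom ≫ Groupoid.inv y.hom, hw⟩
    obtain ⟨ψ, hψ⟩ := (toPseudoPullback f g h i α).map_surjective m'
    have hf : f.map ψ = x.hom ≫ Groupoid.inv y.hom := congrArg CommaMorphism.right hψ
    have hh : h.map ψ = m.left := congrArg CommaMorphism.left hψ
    exact ⟨Comma.fromPUnitHomMk ψ (by simp [hf]), Comma.fromPUnit_hom_ext hh⟩

theorem fiberMap_essSurj [(toPseudoPullback f g h i α).EssSurj] (b : B) :
    (fiberMap f g h i α b).EssSurj where
  mem_essImage y := by
    let p : Comma i g := ⟨y.left, b, y.hom⟩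
    let e := (toPseudoPullback f g h i α).objObjPreimageIso p
    let x : Comma f (Functor.fromPUnit b) := ⟨_, y.right, e.hom.right⟩
    let eh : h.obj _ ≅ y.left := Comma.leftIso e
    exact ⟨x, ⟨Comma.fromPUnitIsoMk eh e.hom.w⟩⟩

theorem toPseudoPullback_faithful [∀ b, (fiberMap f g h i α b).Faithful] :
    (toPseudoPullback f g h i α).Faithful where
  map_injective {a a'} ψ ψ' hψ := by
    have hh : h.map ψ = h.map ψ' := congrArg CommaMorphism.left hψ
    have hf : f.map ψ = f.map ψ' := congrArg CommaMorphism.right hψ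
    let x : Comma f (Functor.fromPUnit (f.obj a')) := ⟨a, ⟨⟨⟩⟩, f.map ψ⟩
    let x' : Comma f (Functor.fromPUnit (f.obj a')) := ⟨a', ⟨⟨⟩⟩, 𝟙 _⟩
    let u : x ⟶ x' := Comma.fromPUnitHomMk ψ (Category.comp_id _)
    let u' : x ⟶ x' := Comma.fromPUnitHomMk ψ' (by simp [x, x', hf])
    have huu' : u = u' :=
      (fiberMap f g h i α (f.obj a')).map_injective (Comma.fromPUnit_hom_ext hh)
    exact congrArg CommaMorphism.left huu'

theorem toPseudoPullback_full [∀ b, (fiberMap f g h i α b).Full] :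
    (toPseudoPullback f g h i α).Full where
  map_surjective {a a'} m := by
    let c : h.obj a ⟶ h.obj a' := m.left
    let φ : f.obj a ⟶ f.obj a' := m.right
    have hm : i.map c ≫ α.inv.app a' = α.inv.app a ≫ g.map φ := m.w
    let x : Comma f (Functor.fromPUnit (f.obj a')) := ⟨a, ⟨⟨⟩⟩, φ⟩
    let x' : Comma f (Functor.fromPUnit (f.obj a')) := ⟨a', ⟨⟨⟩⟩, 𝟙 _⟩
    let F := fiberMap f g h i α (f.obj a')
    let n : F.obj x ⟶ F.obj x' := Comma.fromPUnitHomMk c (by simpa [F, fiberMap, x, x'] using hm)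
    have hh : h.map (F.preimage n).left = c := congrArg CommaMorphism.left (F.map_preimage n)
    have hf : f.map (F.preimage n).left = φ := by simpa [x'] using Comma.fromPUnit_w (F.preimage n)
    exact ⟨(F.preimage n).left, Comma.hom_ext _ _ hh hf⟩

theorem toPseudoPullback_essSurj [∀ b, (fiberMap f g h i α b).EssSurj] :
    (toPseudoPullback f g h i α).EssSurj where
  mem_essImage p := by
    let F := fiberMap f g h i α p.right
    let y : Comma i (Functor.fromPUnit (g.obj p.right)) := ⟨p.left, ⟨⟨⟩⟩, p.hom⟩
    let x := F.objPreimage y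
    let e := F.objObjPreimageIso y
    let eh : h.obj x.left ≅ p.left := Comma.leftIso e
    let φ : f.obj x.left ≅ p.right := asIso x.hom
    exact ⟨x.left, ⟨Comma.isoMk eh φ (Comma.fromPUnit_w e.hom)⟩⟩

end

/-- **Cartesianity is detected on homotopy fibers.** A commutative square of
groupoids (with specified natural isomorphism `g ∘ f ≅ i ∘ h`) is a 2-pullback,
i.e. the comparison functor `A ⥤ C ×_D B` is an equivalence, if and only if for
every object `b` of `B` the induced functor on homotopy fibers
`hofib_b(f) ⥤ hofib_{g(b)}(i)` is an equivalence. -/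
theorem stmt6 (f : A ⥤ B) (g : B ⥤ D) (h : A ⥤ C) (i : C ⥤ D)
    (α : f ⋙ g ≅ h ⋙ i) :
    (toPseudoPullback f g h i α).IsEquivalence ↔
      ∀ b : B, (fiberMap f g h i α b).IsEquivalence := by
  constructor
  · intro _ b
    have := fiberMap_faithful f g h i α b
    have := fiberMap_full f g h i α b
    have := fiberMap_essSurj f g h i α b
    exact { }
  · intro _
    have := toPseudoPullback_faithful f g h i α
    have := toPseudoPullback_full f g h i α
    have := toPseudoPullback_essSurj f g h i α
    exact { }

end
end

section
/- A quasi-isomorphism between two cochain complexes of abelian groups, each with cohomology concentrated in degrees −1 and 0, induces an equivalence of the associated groupoids (the groupoid with objects ker(d⁰) and morphisms x → x' given by classes y ∈ C⁻¹/im(d⁻²) with dy = x − x'). -/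
/-!
Objects of the groupoid up to isomorphism are `H⁰`, and the automorphisms of any object form
`H⁻¹`; more precisely, two morphisms `x ⟶ x'` differ by a class in `ker d⁻¹ / im d⁻² = H⁻¹`,
and `x ⟶ x'` is nonempty iff `x - x'` is a boundary. Hence injectivity on `H⁻¹` gives
faithfulness, surjectivity on `H⁰` essential surjectivity, and fullness combines injectivity
on `H⁰` (to find some morphism) with surjectivity on `H⁻¹` (to correct it to the given one).
-/

open CategoryTheory

section

variable {Cm2 Cm1 C0 C1 : Type*}
  [AddCommGroup Cm2] [AddCommGroup Cm1] [AddCommGroup C0] [AddCommGroup C1]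
variable {Dm2 Dm1 D0 D1 : Type*}
  [AddCommGroup Dm2] [AddCommGroup Dm1] [AddCommGroup D0] [AddCommGroup D1]

/-- The differential `d⁻¹` descends to the quotient `C⁻¹ / im(d⁻²)`. -/
def dBar (d2 : Cm2 →+ Cm1) (d1 : Cm1 →+ C0) (h21 : ∀ a, d1 (d2 a) = 0) :
    Cm1 ⧸ d2.range →+ C0 :=
  QuotientAddGroup.lift d2.range d1 (by rintro _ ⟨a, rfl⟩; exact h21 a)

/-- The groupoid associated to a complex `C⁻² → C⁻¹ → C⁰ → C¹` of abelian groups: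
objects are elements of `ker d⁰`, morphisms `x ⟶ x'` are classes
`y ∈ C⁻¹/d⁻²(C⁻²)` with `d⁻¹(y) = x − x'`; composition is addition. -/
def complexGroupoid (d2 : Cm2 →+ Cm1) (d1 : Cm1 →+ C0) (d0 : C0 →+ C1)
    (h21 : ∀ a, d1 (d2 a) = 0) : Groupoid {x : C0 // d0 x = 0} where
  Hom x x' := {y : Cm1 ⧸ d2.range // dBar d2 d1 h21 y = x.1 - x'.1}
  id x := ⟨0, by simp⟩
  comp {x x' x''} u v := ⟨u.1 + v.1, by rw [map_add, u.2, v.2]; abel⟩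
  inv {x x'} u := ⟨-u.1, by rw [map_neg, u.2]; abel⟩
  id_comp u := Subtype.ext (zero_add _)
  comp_id u := Subtype.ext (add_zero _)
  assoc u v w := Subtype.ext (add_assoc _ _ _)
  inv_comp u := Subtype.ext (neg_add_cancel _)
  comp_inv u := Subtype.ext (add_neg_cancel _)

/-- The functor between the associated groupoids induced by a map of complexes. -/
def inducedFunctor (d2 : Cm2 →+ Cm1) (d1 : Cm1 →+ C0) (d0 : C0 →+ C1)
    (h21 : ∀ a, d1 (d2 a) = 0)
    (e2 : Dm2 →+ Dm1) (e1 : Dm1 →+ D0) (e0 : D0 →+ D1)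
    (k21 : ∀ a, e1 (e2 a) = 0)
    (fm2 : Cm2 →+ Dm2) (fm1 : Cm1 →+ Dm1) (f0 : C0 →+ D0) (f1 : C1 →+ D1)
    (sq2 : ∀ a, fm1 (d2 a) = e2 (fm2 a))
    (sq1 : ∀ y, f0 (d1 y) = e1 (fm1 y))
    (sq0 : ∀ x, f1 (d0 x) = e0 (f0 x)) :
    letI := complexGroupoid d2 d1 d0 h21
    letI := complexGroupoid e2 e1 e0 k21
    {x : C0 // d0 x = 0} ⥤ {x : D0 // e0 x = 0} :=
  letI := complexGroupoid d2 d1 d0 h21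
  letI := complexGroupoid e2 e1 e0 k21
  have hle : d2.range ≤ e2.range.comap fm1 := by
    rintro _ ⟨a, rfl⟩; exact ⟨fm2 a, (sq2 a).symm⟩
  have key : ∀ y : Cm1 ⧸ d2.range,
      dBar e2 e1 k21 (QuotientAddGroup.map d2.range e2.range fm1 hle y) =
        f0 (dBar d2 d1 h21 y) := by
    intro y
    refine QuotientAddGroup.induction_on y ?_
    intro z
    simp [dBar, QuotientAddGroup.map_mk, sq1]
  { obj := fun x => ⟨f0 x.1, by rw [← sq0, x.2, map_zero]⟩
    map := fun {x x'} u =>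
      ⟨QuotientAddGroup.map d2.range e2.range fm1 hle u.1, by
        rw [key, u.2, map_sub]⟩
    map_id := fun x => Subtype.ext (map_zero _)
    map_comp := fun u v => Subtype.ext (map_add _ _ _) }

section QuotientMap

variable (d2 : Cm2 →+ Cm1) (d1 : Cm1 →+ C0) (h21 : ∀ a, d1 (d2 a) = 0)
  (e2 : Dm2 →+ Dm1) (e1 : Dm1 →+ D0) (k21 : ∀ a, e1 (e2 a) = 0)
  {fm1 : Cm1 →+ Dm1} {f0 : C0 →+ D0}

theorem range_le_comap_range {fm2 : Cm2 →+ Dm2} (sq2 : ∀ a, fm1 (d2 a) = e2 (fm2 a)) :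
    d2.range ≤ e2.range.comap fm1 := by
  rintro _ ⟨a, rfl⟩
  exact ⟨fm2 a, (sq2 a).symm⟩

variable {fm2 : Cm2 →+ Dm2} (sq2 : ∀ a, fm1 (d2 a) = e2 (fm2 a))

/-- The action of `inducedFunctor` on morphisms. -/
abbrev quotientMap : Cm1 ⧸ d2.range →+ Dm1 ⧸ e2.range :=
  QuotientAddGroup.map d2.range e2.range fm1 (range_le_comap_range d2 e2 sq2)

theorem eq_zero_of_quotientMap_eq_zero
    (hH1inj : ∀ y : Cm1, d1 y = 0 → (∃ z', fm1 y = e2 z') → ∃ z, y = d2 z)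
    {q : Cm1 ⧸ d2.range} (hq : dBar d2 d1 h21 q = 0) (hmap : quotientMap d2 e2 sq2 q = 0) :
    q = 0 := by
  obtain ⟨y, rfl⟩ := QuotientAddGroup.mk_surjective q
  obtain ⟨z', hz'⟩ := (QuotientAddGroup.eq_zero_iff _).mp hmap
  obtain ⟨z, rfl⟩ := hH1inj y hq ⟨z', hz'.symm⟩
  exact (QuotientAddGroup.eq_zero_iff _).mpr ⟨z, rfl⟩

/-- First `x = d y₀` by injectivity on `H⁰`; then `f y₀` differs from a representative of `q'`
by a cycle, which surjectivity on `H⁻¹` lifts, up to a boundary, to a cycle `w`; take `y₀ - w`. -/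
theorem exists_quotientMap_eq (sq1 : ∀ y, f0 (d1 y) = e1 (fm1 y)) {d0 : C0 →+ C1}
    (hH0inj : ∀ x : C0, d0 x = 0 → (∃ y', f0 x = e1 y') → ∃ y, x = d1 y)
    (hH1surj : ∀ y' : Dm1, e1 y' = 0 → ∃ y : Cm1, d1 y = 0 ∧ ∃ z', fm1 y - y' = e2 z')
    {x : C0} (hx : d0 x = 0) {q' : Dm1 ⧸ e2.range} (hq' : dBar e2 e1 k21 q' = f0 x) :
    ∃ q, dBar d2 d1 h21 q = x ∧ quotientMap d2 e2 sq2 q = q' := by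
  obtain ⟨y', rfl⟩ := QuotientAddGroup.mk_surjective q'
  obtain ⟨y₀, rfl⟩ := hH0inj x hx ⟨y', hq'.symm⟩
  have hcycle : e1 (fm1 y₀ - y') = 0 := by
    rw [map_sub, ← sq1, sub_eq_zero]
    exact hq'.symm
  obtain ⟨w, hw, z', hz'⟩ := hH1surj _ hcycle
  refine ⟨(y₀ - w : Cm1), by simp [dBar, hw], ?_⟩
  refine QuotientAddGroup.eq_iff_sub_mem.mpr ⟨-z', ?_⟩
  rw [map_neg, ← hz', map_sub]
  abel

end QuotientMap

section Functor

variable (d2 : Cm2 →+ Cm1) (d1 : Cm1 →+ C0) (d0 : C0 →+ C1) (h21 : ∀ a, d1 (d2 a) = 0)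
  (e2 : Dm2 →+ Dm1) (e1 : Dm1 →+ D0) (e0 : D0 →+ D1) (k21 : ∀ a, e1 (e2 a) = 0)
  {fm2 : Cm2 →+ Dm2} {fm1 : Cm1 →+ Dm1} {f0 : C0 →+ D0} {f1 : C1 →+ D1}
  (sq2 : ∀ a, fm1 (d2 a) = e2 (fm2 a)) (sq1 : ∀ y, f0 (d1 y) = e1 (fm1 y))
  (sq0 : ∀ x, f1 (d0 x) = e0 (f0 x))

theorem inducedFunctor_faithful
    (hH1inj : ∀ y : Cm1, d1 y = 0 → (∃ z', fm1 y = e2 z') → ∃ z, y = d2 z) :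
    letI := complexGroupoid d2 d1 d0 h21
    letI := complexGroupoid e2 e1 e0 k21
    (inducedFunctor d2 d1 d0 h21 e2 e1 e0 k21 fm2 fm1 f0 f1 sq2 sq1 sq0).Faithful := by
  let := complexGroupoid d2 d1 d0 h21
  let := complexGroupoid e2 e1 e0 k21
  refine ⟨fun {x x'} u v huv => Subtype.ext (sub_eq_zero.mp ?_)⟩
  refine eq_zero_of_quotientMap_eq_zero d2 d1 h21 e2 sq2 hH1inj ?_ ?_
  · rw [map_sub, u.2, v.2, sub_self]
  · rw [map_sub, sub_eq_zero]
    exact congrArg Subtype.val huv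

theorem inducedFunctor_full
    (hH0inj : ∀ x : C0, d0 x = 0 → (∃ y', f0 x = e1 y') → ∃ y, x = d1 y)
    (hH1surj : ∀ y' : Dm1, e1 y' = 0 → ∃ y : Cm1, d1 y = 0 ∧ ∃ z', fm1 y - y' = e2 z') :
    letI := complexGroupoid d2 d1 d0 h21
    letI := complexGroupoid e2 e1 e0 k21
    (inducedFunctor d2 d1 d0 h21 e2 e1 e0 k21 fm2 fm1 f0 f1 sq2 sq1 sq0).Full := by
  let := complexGroupoid d2 d1 d0 h21
  let := complexGroupoid e2 e1 e0 k21
  refine ⟨fun {x x'} u' => ?_⟩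
  have hcycle : d0 (x.1 - x'.1) = 0 := by rw [map_sub, x.2, x'.2, sub_self]
  have hu' : dBar e2 e1 k21 u'.1 = f0 (x.1 - x'.1) := by rw [u'.2, map_sub]; rfl
  obtain ⟨q, hq, hmap⟩ :=
    exists_quotientMap_eq d2 d1 h21 e2 e1 k21 sq2 sq1 hH0inj hH1surj hcycle hu'
  exact ⟨⟨q, hq⟩, Subtype.ext hmap⟩

theorem inducedFunctor_essSurj
    (hH0surj : ∀ x' : D0, e0 x' = 0 → ∃ x : C0, d0 x = 0 ∧ ∃ y', f0 x - x' = e1 y') :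
    letI := complexGroupoid d2 d1 d0 h21
    letI := complexGroupoid e2 e1 e0 k21
    (inducedFunctor d2 d1 d0 h21 e2 e1 e0 k21 fm2 fm1 f0 f1 sq2 sq1 sq0).EssSurj := by
  let := complexGroupoid d2 d1 d0 h21
  let := complexGroupoid e2 e1 e0 k21
  refine ⟨fun x' => ?_⟩
  obtain ⟨x, hx, y', hy'⟩ := hH0surj x'.1 x'.2
  exact ⟨⟨x, hx⟩, ⟨(Groupoid.isoEquivHom _ _).symm ⟨(y' : Dm1 ⧸ e2.range), hy'.symm⟩⟩⟩

end Functor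

theorem stmt8_general (d2 : Cm2 →+ Cm1) (d1 : Cm1 →+ C0) (d0 : C0 →+ C1)
    (h21 : ∀ a, d1 (d2 a) = 0)
    (e2 : Dm2 →+ Dm1) (e1 : Dm1 →+ D0) (e0 : D0 →+ D1)
    (k21 : ∀ a, e1 (e2 a) = 0)
    (fm2 : Cm2 →+ Dm2) (fm1 : Cm1 →+ Dm1) (f0 : C0 →+ D0) (f1 : C1 →+ D1)
    (sq2 : ∀ a, fm1 (d2 a) = e2 (fm2 a))
    (sq1 : ∀ y, f0 (d1 y) = e1 (fm1 y))
    (sq0 : ∀ x, f1 (d0 x) = e0 (f0 x))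
    -- the map is a quasi-isomorphism: it induces a bijection on `H⁰` …
    (hH0surj : ∀ x' : D0, e0 x' = 0 → ∃ x : C0, d0 x = 0 ∧ ∃ y', f0 x - x' = e1 y')
    (hH0inj : ∀ x : C0, d0 x = 0 → (∃ y', f0 x = e1 y') → ∃ y, x = d1 y)
    -- … and on `H⁻¹`
    (hH1surj : ∀ y' : Dm1, e1 y' = 0 → ∃ y : Cm1, d1 y = 0 ∧ ∃ z', fm1 y - y' = e2 z')
    (hH1inj : ∀ y : Cm1, d1 y = 0 → (∃ z', fm1 y = e2 z') → ∃ z, y = d2 z) :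
    letI := complexGroupoid d2 d1 d0 h21
    letI := complexGroupoid e2 e1 e0 k21
    (inducedFunctor d2 d1 d0 h21 e2 e1 e0 k21 fm2 fm1 f0 f1
      sq2 sq1 sq0).IsEquivalence :=
  letI := complexGroupoid d2 d1 d0 h21
  letI := complexGroupoid e2 e1 e0 k21
  have := inducedFunctor_faithful d2 d1 d0 h21 e2 e1 e0 k21 sq2 sq1 sq0 hH1inj
  have := inducedFunctor_full d2 d1 d0 h21 e2 e1 e0 k21 sq2 sq1 sq0 hH0inj hH1surj
  have := inducedFunctor_essSurj d2 d1 d0 h21 e2 e1 e0 k21 sq2 sq1 sq0 hH0surj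
  { }

/-- **A quasi-isomorphism induces an equivalence of associated groupoids.**
If a map of complexes (each with cohomology concentrated in degrees `−1, 0`)
induces isomorphisms on `H⁻¹` and on `H⁰` (stated elementwise below), then the
induced functor between the associated groupoids is an equivalence. -/
theorem stmt8 (d2 : Cm2 →+ Cm1) (d1 : Cm1 →+ C0) (d0 : C0 →+ C1)
    (h21 : ∀ a, d1 (d2 a) = 0) (h10 : ∀ y, d0 (d1 y) = 0)
    (e2 : Dm2 →+ Dm1) (e1 : Dm1 →+ D0) (e0 : D0 →+ D1)
    (k21 : ∀ a, e1 (e2 a) = 0) (k10 : ∀ y, e0 (e1 y) = 0)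
    (fm2 : Cm2 →+ Dm2) (fm1 : Cm1 →+ Dm1) (f0 : C0 →+ D0) (f1 : C1 →+ D1)
    (sq2 : ∀ a, fm1 (d2 a) = e2 (fm2 a))
    (sq1 : ∀ y, f0 (d1 y) = e1 (fm1 y))
    (sq0 : ∀ x, f1 (d0 x) = e0 (f0 x))
    -- the map is a quasi-isomorphism: it induces a bijection on `H⁰` …
    (hH0surj : ∀ x' : D0, e0 x' = 0 → ∃ x : C0, d0 x = 0 ∧ ∃ y', f0 x - x' = e1 y')
    (hH0inj : ∀ x : C0, d0 x = 0 → (∃ y', f0 x = e1 y') → ∃ y, x = d1 y)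
    -- … and on `H⁻¹`
    (hH1surj : ∀ y' : Dm1, e1 y' = 0 → ∃ y : Cm1, d1 y = 0 ∧ ∃ z', fm1 y - y' = e2 z')
    (hH1inj : ∀ y : Cm1, d1 y = 0 → (∃ z', fm1 y = e2 z') → ∃ z, y = d2 z) :
    letI := complexGroupoid d2 d1 d0 h21
    letI := complexGroupoid e2 e1 e0 k21
    (inducedFunctor d2 d1 d0 h21 e2 e1 e0 k21 fm2 fm1 f0 f1
      sq2 sq1 sq0).IsEquivalence :=
  stmt8_general d2 d1 d0 h21 e2 e1 e0 k21 fm2 fm1 f0 f1 sq2 sq1 sq0 hH0surj hH0inj hH1surj hH1inj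

end
end

section
/- Let F be a stack in groupoids for the h-topology on finite type schemes over a Noetherian scheme, let f : Y → X be a proper surjective morphism, and suppose Y = Y₁ ∪ Y₂ for closed subschemes Y₁, Y₂ with f(Y₁ ∩ Y₂) = X₁ ∩ X₂ where Xᵢ = f(Yᵢ), and suppose the pullback functor F(X₁ ∩ X₂) → F(Y₁ ∩ Y₂) is fully faithful. Then an object ξ ∈ F(Y) lies in the essential image of f* : F(X) → F(Y) if and only if ξ|_{Y₁} lies in the essential image of F(X₁) → F(Y₁) and ξ|_{Y₂} lies in the essential image of F(X₂) → F(Y₂). -/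
/-!
Given identifications `e₁ : u₁ η₁ ≅ c₁ ξ` and `e₂ : u₂ η₂ ≅ c₂ ξ`, comparing them over `Y₁ ∩ Y₂`
through `γY` and `β₁, β₂` gives a morphism `u₁₂ (b₁ η₁) ⟶ u₁₂ (b₂ η₂)`. As `u₁₂` is full, this is
the image of a morphism `b₁ η₁ ⟶ b₂ η₂` of the groupoid `F(X₁ ∩ X₂)`, i.e. of a gluing datum, which
descends along `X₁ ⊔ X₂ → X` to some `η`. The coherence of the pullback isomorphisms then shows
that the induced identifications `c₁ (u η) ≅ c₁ ξ` and `c₂ (u η) ≅ c₂ ξ` agree over `Y₁ ∩ Y₂`,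
so `u η ≅ ξ` by separation along `Y₁ ⊔ Y₂ → Y`.
-/

namespace CategoryTheory

lemma NatTrans.naturality_comp_map {C D D' E : Type*} [Category C] [Category D] [Category D']
    [Category E] {F : C ⥤ D} {G : D ⥤ E} {F' : C ⥤ D'} {G' : D' ⥤ E} (τ : F ⋙ G ⟶ F' ⋙ G')
    {X Y : C} (f : X ⟶ Y) : G.map (F.map f) ≫ τ.app Y = τ.app X ≫ G'.map (F'.map f) :=
  τ.naturality f

section TwoPieceGluing

variable {FX FX₁ FX₂ FX₁₂ FY FY₁ FY₂ FY₁₂ : Type*}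
  [Category FX] [Category FX₁] [Category FX₂] [Category FX₁₂]
  [Category FY] [Category FY₁] [Category FY₂] [Category FY₁₂]
  {a₁ : FX ⥤ FX₁} {a₂ : FX ⥤ FX₂} {b₁ : FX₁ ⥤ FX₁₂} {b₂ : FX₂ ⥤ FX₁₂}
  {c₁ : FY ⥤ FY₁} {c₂ : FY ⥤ FY₂} {d₁ : FY₁ ⥤ FY₁₂} {d₂ : FY₂ ⥤ FY₁₂}
  {u : FX ⥤ FY} {u₁ : FX₁ ⥤ FY₁} {u₂ : FX₂ ⥤ FY₂} (u₁₂ : FX₁₂ ⥤ FY₁₂)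
  {γX : a₁ ⋙ b₁ ≅ a₂ ⋙ b₂} (γY : c₁ ⋙ d₁ ≅ c₂ ⋙ d₂)
  {α₁ : a₁ ⋙ u₁ ≅ u ⋙ c₁} {α₂ : a₂ ⋙ u₂ ≅ u ⋙ c₂}
  (β₁ : b₁ ⋙ u₁₂ ≅ u₁ ⋙ d₁) (β₂ : b₂ ⋙ u₁₂ ≅ u₂ ⋙ d₂)

def gluingComparison {ξ : FY} {η₁ : FX₁} {η₂ : FX₂}
    (e₁ : u₁.obj η₁ ≅ c₁.obj ξ) (e₂ : u₂.obj η₂ ≅ c₂.obj ξ) :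
    u₁₂.obj (b₁.obj η₁) ⟶ u₁₂.obj (b₂.obj η₂) :=
  β₁.hom.app η₁ ≫ d₁.map e₁.hom ≫ γY.hom.app ξ ≫ d₂.map e₂.inv ≫ β₂.inv.app η₂

variable {u₁₂ γY β₁ β₂}

lemma coherence_app
    (hcoh :
      (Functor.associator a₁ b₁ u₁₂).symm ≪≫ Functor.isoWhiskerRight γX u₁₂ ≪≫
        Functor.associator a₂ b₂ u₁₂ ≪≫ Functor.isoWhiskerLeft a₂ β₂ ≪≫
        (Functor.associator a₂ u₂ d₂).symm ≪≫ Functor.isoWhiskerRight α₂ d₂ ≪≫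
        Functor.associator u c₂ d₂ =
      Functor.isoWhiskerLeft a₁ β₁ ≪≫ (Functor.associator a₁ u₁ d₁).symm ≪≫
        Functor.isoWhiskerRight α₁ d₁ ≪≫ Functor.associator u c₁ d₁ ≪≫
        Functor.isoWhiskerLeft u γY)
    (η : FX) :
    u₁₂.map (γX.hom.app η) ≫ β₂.hom.app (a₂.obj η) ≫ d₂.map (α₂.hom.app η) =
      β₁.hom.app (a₁.obj η) ≫ d₁.map (α₁.hom.app η) ≫ γY.hom.app (u.obj η) := by
  simpa using congrArg (fun i => i.hom.app η) hcoh

lemma restrictions_compatible_of_descent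
    (hcoh : ∀ η : FX,
      u₁₂.map (γX.hom.app η) ≫ β₂.hom.app (a₂.obj η) ≫ d₂.map (α₂.hom.app η) =
        β₁.hom.app (a₁.obj η) ≫ d₁.map (α₁.hom.app η) ≫ γY.hom.app (u.obj η))
    {ξ : FY} {η₁ : FX₁} {η₂ : FX₂} (e₁ : u₁.obj η₁ ≅ c₁.obj ξ) (e₂ : u₂.obj η₂ ≅ c₂.obj ξ)
    {φ : b₁.obj η₁ ⟶ b₂.obj η₂} (hφ : u₁₂.map φ = gluingComparison u₁₂ γY β₁ β₂ e₁ e₂)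
    {η : FX} (f₁ : a₁.obj η ⟶ η₁) (f₂ : a₂.obj η ⟶ η₂)
    (hdesc : γX.hom.app η ≫ b₂.map f₂ = b₁.map f₁ ≫ φ) :
    γY.hom.app (u.obj η) ≫ d₂.map (α₂.inv.app η ≫ u₂.map f₂ ≫ e₂.hom) =
      d₁.map (α₁.inv.app η ≫ u₁.map f₁ ≫ e₁.hom) ≫ γY.hom.app ξ := by
  suffices β₁.hom.app (a₁.obj η) ≫ d₁.map (α₁.hom.app η) ≫ γY.hom.app (u.obj η) ≫
      d₂.map (α₂.inv.app η ≫ u₂.map f₂ ≫ e₂.hom) =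
      β₁.hom.app (a₁.obj η) ≫ d₁.map (u₁.map f₁ ≫ e₁.hom) ≫ γY.hom.app ξ by
    rw [← cancel_epi (β₁.hom.app (a₁.obj η) ≫ d₁.map (α₁.hom.app η))]
    simpa using this
  calc _ = u₁₂.map (γX.hom.app η ≫ b₂.map f₂) ≫ β₂.hom.app η₂ ≫ d₂.map e₂.hom := by
        rw [reassoc_of% (hcoh η).symm]
        simp [reassoc_of% NatTrans.naturality_comp_map β₂.hom f₂]
    _ = u₁₂.map (b₁.map f₁) ≫ β₁.hom.app η₁ ≫ d₁.map e₁.hom ≫ γY.hom.app ξ := by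
        simp [hdesc, hφ, gluingComparison]
    _ = _ := by simp [reassoc_of% NatTrans.naturality_comp_map β₁.hom f₁]

end TwoPieceGluing

end CategoryTheory

open CategoryTheory AlgebraicGeometry

theorem stmt18_general
    -- the values of the stack `F` on the relevant schemes:
    {FX FX₁ FX₂ FX₁₂ FY FY₁ FY₂ FY₁₂ : Type*}
    [Groupoid FX] [Groupoid FX₁] [Groupoid FX₂] [Groupoid FX₁₂]
    [Groupoid FY] [Groupoid FY₁] [Groupoid FY₂] [Groupoid FY₁₂]
    -- restriction functors on the `X`-side and on the `Y`-side:
    (a₁ : FX ⥤ FX₁) (a₂ : FX ⥤ FX₂) (b₁ : FX₁ ⥤ FX₁₂) (b₂ : FX₂ ⥤ FX₁₂)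
    (c₁ : FY ⥤ FY₁) (c₂ : FY ⥤ FY₂) (d₁ : FY₁ ⥤ FY₁₂) (d₂ : FY₂ ⥤ FY₁₂)
    -- pullback functors along `f` and its restrictions:
    (u : FX ⥤ FY) (u₁ : FX₁ ⥤ FY₁) (u₂ : FX₂ ⥤ FY₂) (u₁₂ : FX₁₂ ⥤ FY₁₂)
    -- coherence isomorphisms:
    (γX : a₁ ⋙ b₁ ≅ a₂ ⋙ b₂) (γY : c₁ ⋙ d₁ ≅ c₂ ⋙ d₂)
    (α₁ : a₁ ⋙ u₁ ≅ u ⋙ c₁) (α₂ : a₂ ⋙ u₂ ≅ u ⋙ c₂)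
    (β₁ : b₁ ⋙ u₁₂ ≅ u₁ ⋙ d₁) (β₂ : b₂ ⋙ u₁₂ ≅ u₂ ⋙ d₂)
    (hcoh :
      (Functor.associator a₁ b₁ u₁₂).symm ≪≫ Functor.isoWhiskerRight γX u₁₂ ≪≫
        Functor.associator a₂ b₂ u₁₂ ≪≫ Functor.isoWhiskerLeft a₂ β₂ ≪≫
        (Functor.associator a₂ u₂ d₂).symm ≪≫ Functor.isoWhiskerRight α₂ d₂ ≪≫
        Functor.associator u c₂ d₂ =
      Functor.isoWhiskerLeft a₁ β₁ ≪≫ (Functor.associator a₁ u₁ d₁).symm ≪≫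
        Functor.isoWhiskerRight α₁ d₁ ≪≫ Functor.associator u c₁ d₁ ≪≫
        Functor.isoWhiskerLeft u γY)
    -- h-descent along the cover `X₁ ⊔ X₂ → X` is effective:
    (hdescX : ∀ (ξ₁ : FX₁) (ξ₂ : FX₂) (φ : b₁.obj ξ₁ ≅ b₂.obj ξ₂),
      ∃ (η : FX) (e₁ : a₁.obj η ≅ ξ₁) (e₂ : a₂.obj η ≅ ξ₂),
        γX.hom.app η ≫ b₂.map e₂.hom = b₁.map e₁.hom ≫ φ.hom)
    -- objects of `F(Y)` are determined by their restrictions to `Y₁`, `Y₂`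
    -- together with the comparison over `Y₁ ∩ Y₂`:
    (hsepY : ∀ (ξ ξ' : FY) (ψ₁ : c₁.obj ξ ≅ c₁.obj ξ') (ψ₂ : c₂.obj ξ ≅ c₂.obj ξ'),
      γY.hom.app ξ ≫ d₂.map ψ₂.hom = d₁.map ψ₁.hom ≫ γY.hom.app ξ' →
      Nonempty (ξ ≅ ξ'))
    -- the hypothesis of the lemma: `F(X₁ ∩ X₂) → F(Y₁ ∩ Y₂)` is fully faithful:
    [u₁₂.Full]
    (ξ : FY) :
    (∃ η : FX, Nonempty (u.obj η ≅ ξ)) ↔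
      ((∃ η₁ : FX₁, Nonempty (u₁.obj η₁ ≅ c₁.obj ξ)) ∧
        (∃ η₂ : FX₂, Nonempty (u₂.obj η₂ ≅ c₂.obj ξ))) := by
  refine ⟨fun ⟨η, ⟨e⟩⟩ => ⟨⟨a₁.obj η, ⟨α₁.app η ≪≫ c₁.mapIso e⟩⟩,
    ⟨a₂.obj η, ⟨α₂.app η ≪≫ c₂.mapIso e⟩⟩⟩, ?_⟩
  rintro ⟨⟨η₁, ⟨e₁⟩⟩, ⟨η₂, ⟨e₂⟩⟩⟩
  obtain ⟨η, f₁, f₂, hdesc⟩ :=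
    hdescX η₁ η₂ (asIso (u₁₂.preimage (gluingComparison u₁₂ γY β₁ β₂ e₁ e₂)))
  refine ⟨η, hsepY _ _ ((α₁.app η).symm ≪≫ u₁.mapIso f₁ ≪≫ e₁)
    ((α₂.app η).symm ≪≫ u₂.mapIso f₂ ≪≫ e₂) ?_⟩
  simpa using restrictions_compatible_of_descent (coherence_app hcoh) e₁ e₂
    (u₁₂.map_preimage _) f₁.hom f₂.hom hdesc

/-- **Gluing essential images along a union of two closed pieces** (for a stack in
groupoids for the h-topology). Let `f : Y → X` be a proper surjective morphism of
Noetherian schemes, `Y = Y₁ ∪ Y₂` a union of closed subschemes with images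
`Xᵢ = f(Yᵢ)` satisfying `f(Y₁ ∩ Y₂) = X₁ ∩ X₂`. Let `F` be a stack in groupoids
for the h-topology; below we record its values on the relevant schemes as abstract
groupoids `FX = F(X), FX₁ = F(X₁), FX₂ = F(X₂), FX₁₂ = F(X₁ ∩ X₂)`,
`FY, FY₁, FY₂, FY₁₂`, together with the restriction functors `aᵢ, bᵢ, cᵢ, dᵢ`, the
pullback functors `u, u₁, u₂, u₁₂` along `f` and its restrictions, the coherence
isomorphisms between them, and the two instances of the stack (h-descent)
condition which the statement uses: effectivity of descent along the h-cover
`X₁ ⊔ X₂ → X` (`hdescX`) and separation for the h-cover `Y₁ ⊔ Y₂ → Y` (`hsepY`).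
Assume that `u₁₂ : F(X₁ ∩ X₂) ⥤ F(Y₁ ∩ Y₂)` is fully faithful. Then an object
`ξ ∈ F(Y)` lies in the essential image of `u : F(X) ⥤ F(Y)` if and only if
`ξ|_{Y₁}` and `ξ|_{Y₂}` lie in the essential images of `F(X₁) ⥤ F(Y₁)` and
`F(X₂) ⥤ F(Y₂)` respectively. -/
theorem stmt18
    -- the geometric situation:
    {Y X Y₁ Y₂ Y₁₂ X₁ X₂ X₁₂ : Scheme}
    [IsNoetherian X] [IsNoetherian Y]
    (f : Y ⟶ X) [IsProper f] [Surjective f]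
    (j₁ : Y₁ ⟶ Y) (j₂ : Y₂ ⟶ Y) (j₁₂ : Y₁₂ ⟶ Y)
    (k₁ : X₁ ⟶ X) (k₂ : X₂ ⟶ X) (k₁₂ : X₁₂ ⟶ X)
    [IsClosedImmersion j₁] [IsClosedImmersion j₂] [IsClosedImmersion j₁₂]
    [IsClosedImmersion k₁] [IsClosedImmersion k₂] [IsClosedImmersion k₁₂]
    (hY : Set.range j₁.base ∪ Set.range j₂.base = Set.univ)
    (hY12 : Set.range j₁₂.base = Set.range j₁.base ∩ Set.range j₂.base)
    (hX1 : Set.range k₁.base = f.base '' Set.range j₁.base)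
    (hX2 : Set.range k₂.base = f.base '' Set.range j₂.base)
    (hX12 : Set.range k₁₂.base = Set.range k₁.base ∩ Set.range k₂.base)
    (himg : f.base '' Set.range j₁₂.base = Set.range k₁₂.base)
    -- the values of the stack `F` on the relevant schemes:
    {FX FX₁ FX₂ FX₁₂ FY FY₁ FY₂ FY₁₂ : Type*}
    [Groupoid FX] [Groupoid FX₁] [Groupoid FX₂] [Groupoid FX₁₂]
    [Groupoid FY] [Groupoid FY₁] [Groupoid FY₂] [Groupoid FY₁₂]
    -- restriction functors on the `X`-side and on the `Y`-side:
    (a₁ : FX ⥤ FX₁) (a₂ : FX ⥤ FX₂) (b₁ : FX₁ ⥤ FX₁₂) (b₂ : FX₂ ⥤ FX₁₂)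
    (c₁ : FY ⥤ FY₁) (c₂ : FY ⥤ FY₂) (d₁ : FY₁ ⥤ FY₁₂) (d₂ : FY₂ ⥤ FY₁₂)
    -- pullback functors along `f` and its restrictions:
    (u : FX ⥤ FY) (u₁ : FX₁ ⥤ FY₁) (u₂ : FX₂ ⥤ FY₂) (u₁₂ : FX₁₂ ⥤ FY₁₂)
    -- coherence isomorphisms:
    (γX : a₁ ⋙ b₁ ≅ a₂ ⋙ b₂) (γY : c₁ ⋙ d₁ ≅ c₂ ⋙ d₂)
    (α₁ : a₁ ⋙ u₁ ≅ u ⋙ c₁) (α₂ : a₂ ⋙ u₂ ≅ u ⋙ c₂)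
    (β₁ : b₁ ⋙ u₁₂ ≅ u₁ ⋙ d₁) (β₂ : b₂ ⋙ u₁₂ ≅ u₂ ⋙ d₂)
    (hcoh :
      (Functor.associator a₁ b₁ u₁₂).symm ≪≫ Functor.isoWhiskerRight γX u₁₂ ≪≫
        Functor.associator a₂ b₂ u₁₂ ≪≫ Functor.isoWhiskerLeft a₂ β₂ ≪≫
        (Functor.associator a₂ u₂ d₂).symm ≪≫ Functor.isoWhiskerRight α₂ d₂ ≪≫
        Functor.associator u c₂ d₂ =
      Functor.isoWhiskerLeft a₁ β₁ ≪≫ (Functor.associator a₁ u₁ d₁).symm ≪≫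
        Functor.isoWhiskerRight α₁ d₁ ≪≫ Functor.associator u c₁ d₁ ≪≫
        Functor.isoWhiskerLeft u γY)
    -- h-descent along the cover `X₁ ⊔ X₂ → X` is effective:
    (hdescX : ∀ (ξ₁ : FX₁) (ξ₂ : FX₂) (φ : b₁.obj ξ₁ ≅ b₂.obj ξ₂),
      ∃ (η : FX) (e₁ : a₁.obj η ≅ ξ₁) (e₂ : a₂.obj η ≅ ξ₂),
        γX.hom.app η ≫ b₂.map e₂.hom = b₁.map e₁.hom ≫ φ.hom)
    -- objects of `F(Y)` are determined by their restrictions to `Y₁`, `Y₂`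
    -- together with the comparison over `Y₁ ∩ Y₂`:
    (hsepY : ∀ (ξ ξ' : FY) (ψ₁ : c₁.obj ξ ≅ c₁.obj ξ') (ψ₂ : c₂.obj ξ ≅ c₂.obj ξ'),
      γY.hom.app ξ ≫ d₂.map ψ₂.hom = d₁.map ψ₁.hom ≫ γY.hom.app ξ' →
      Nonempty (ξ ≅ ξ'))
    -- the hypothesis of the lemma: `F(X₁ ∩ X₂) → F(Y₁ ∩ Y₂)` is fully faithful:
    [u₁₂.Full] [u₁₂.Faithful]
    (ξ : FY) :
    (∃ η : FX, Nonempty (u.obj η ≅ ξ)) ↔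
      ((∃ η₁ : FX₁, Nonempty (u₁.obj η₁ ≅ c₁.obj ξ)) ∧
        (∃ η₂ : FX₂, Nonempty (u₂.obj η₂ ≅ c₂.obj ξ))) :=
  stmt18_general a₁ a₂ b₁ b₂ c₁ c₂ d₁ d₂ u u₁ u₂ u₁₂ γX γY α₁ α₂ β₁ β₂ hcoh hdescX hsepY ξ
end
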